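/- Let p ≥ 1 and let g be the map sending an invertible p×p real matrix S to its normalized inverse g(S) = d(S⁻¹) · S⁻¹ · d(S⁻¹), where d(P) is the diagonal matrix with entries (P_{ii})^{-1/2}. Let Σ be an invertible p×p real matrix such that P := Σ⁻¹ has strictly positive diagonal entries, let P_d be the diagonal matrix with entries P_{ii}, and let Ω = g(Σ) = d(P)·P·d(P). Then g is Fréchet differentiable at Σ with derivative H ↦ −d(P) · (P H P) · d(P) + (1/2)(dg(P H P) · P_d⁻¹ · Ω + Ω · P_d⁻¹ · dg(P H P)), where dg(M) denotes the diagonal matrix with entries M_{ii}. -/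

import Mathlib

open Matrix

attribute [local instance] Matrix.normedAddCommGroup Matrix.normedSpace

/-- `d(P)`: the diagonal matrix with entries `(P_{ii})^{-1/2}`. -/
noncomputable def dmat {p : ℕ} (P : Matrix (Fin p) (Fin p) ℝ) : Matrix (Fin p) (Fin p) ℝ :=
  Matrix.diagonal fun i => (Real.sqrt (P i i))⁻¹

/-- The normalized-inverse map `g(S) = d(S⁻¹) · S⁻¹ · d(S⁻¹)`. -/
noncomputable def normalizedInv {p : ℕ} (S : Matrix (Fin p) (Fin p) ℝ) :
    Matrix (Fin p) (Fin p) ℝ :=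
  dmat S⁻¹ * S⁻¹ * dmat S⁻¹

/-! With `P = Σ⁻¹`, `normalizedInv` is `P ↦ d(P) P d(P)` composed with inversion, whose derivative
is `H ↦ -P H P`. Since `x ↦ x^{-1/2}` has derivative `-½ x^{-3/2}`, the derivative of `d` at `P` is
`K ↦ -½ dg(K) d(P)³`, and the product rule gives `K ↦ d K d - ½ (dg(K) d² Ω + Ω d² dg(K))` for the
normalization: diagonal matrices commute, so `d³` splits as `d² · d` on either side of `P`.
Finally `d(P)² = P_d⁻¹`. -/

theorem hasDerivAt_inv_sqrt {x : ℝ} (hx : 0 < x) :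
    HasDerivAt (fun y => (√y)⁻¹) (-(1 / 2) * (√x)⁻¹ ^ 3) x := by
  have hs : √x ≠ 0 := (Real.sqrt_pos.2 hx).ne'
  refine ((Real.hasDerivAt_sqrt hx.ne').inv hs).congr_deriv ?_
  field_simp

theorem dmat_sq_eq_inv_diagonal {p : ℕ} {P : Matrix (Fin p) (Fin p) ℝ} (hP : ∀ i, 0 < P i i) :
    dmat P ^ 2 = (diagonal fun i => P i i)⁻¹ := by
  refine (Matrix.inv_eq_left_inv ?_).symm
  simp only [dmat, diagonal_pow, diagonal_mul_diagonal, Pi.pow_apply, inv_pow,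
    Real.sq_sqrt (hP _).le, inv_mul_cancel₀ (hP _).ne', diagonal_one]

noncomputable def normalizeDiag {p : ℕ} (P : Matrix (Fin p) (Fin p) ℝ) :
    Matrix (Fin p) (Fin p) ℝ :=
  dmat P * P * dmat P

def Matrix.diagonalPart (R n : Type*) [Semiring R] [DecidableEq n] :
    Matrix n n R →ₗ[R] Matrix n n R :=
  diagonalLinearMap n R R ∘ₗ diagLinearMap n R R

@[simp] theorem Matrix.diagonalPart_apply {R n : Type*} [Semiring R] [DecidableEq n]
    (A : Matrix n n R) : diagonalPart R n A = diagonal A.diag := rfl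

section

open LinearMap (toContinuousLinearMap mulLeftRight mulLeft mulRight)

theorem Matrix.hasFDerivAt_nonsing_inv {𝕜 n : Type*} [RCLike 𝕜] [Fintype n] [DecidableEq n]
    {A : Matrix n n 𝕜} (hA : IsUnit A) :
    HasFDerivAt (fun S : Matrix n n 𝕜 => S⁻¹)
      (-toContinuousLinearMap (mulLeftRight 𝕜 (A⁻¹, A⁻¹))) A := by
  -- `HasFDerivAt` only sees the topology, so we may borrow the `L∞` operator norm, which makes
  -- the matrices a complete normed algebra.
  let _ : NormedAddCommGroup (Matrix n n 𝕜) := Matrix.linftyOpNormedAddCommGroup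
  let _ : NormedSpace 𝕜 (Matrix n n 𝕜) := Matrix.linftyOpNormedSpace
  have : ProperSpace (Matrix n n 𝕜) := FiniteDimensional.proper_rclike 𝕜 _
  let _ : NormedRing (Matrix n n 𝕜) := Matrix.linftyOpNormedRing
  let _ : NormedAlgebra 𝕜 (Matrix n n 𝕜) := Matrix.linftyOpNormedAlgebra
  have := hasFDerivAt_ringInverse (𝕜 := 𝕜) hA.unit
  rwa [Matrix.coe_units_inv, IsUnit.unit_spec,
    ← funext_iff.2 Matrix.nonsing_inv_eq_ringInverse] at this

theorem Matrix.hasFDerivAt_diagonal_comp_diag {𝕜 n : Type*} [NontriviallyNormedField 𝕜]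
    [CompleteSpace 𝕜] [Fintype n] [DecidableEq n] {f f' : 𝕜 → 𝕜} {A : Matrix n n 𝕜}
    (hf : ∀ i, HasDerivAt f (f' (A i i)) (A i i)) :
    HasFDerivAt (fun S : Matrix n n 𝕜 => diagonal fun i => f (S i i))
      (toContinuousLinearMap (mulLeft 𝕜 (diagonal fun i => f' (A i i)) ∘ₗ diagonalPart 𝕜 n)) A := by
  have hentry : ∀ i, HasFDerivAt (fun S : Matrix n n 𝕜 => f (S i i))
      (f' (A i i) • toContinuousLinearMap (entryLinearMap 𝕜 𝕜 i i)) A := fun i =>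
    (hf i).comp_hasFDerivAt A (toContinuousLinearMap (entryLinearMap 𝕜 𝕜 i i)).hasFDerivAt
  refine ((toContinuousLinearMap (diagonalLinearMap n 𝕜 𝕜)).hasFDerivAt.comp A
    (hasFDerivAt_pi.2 hentry)).congr_fderiv ?_
  ext K : 1
  exact (diagonal_mul_diagonal _ _).symm

variable {p : ℕ} {P : Matrix (Fin p) (Fin p) ℝ}

theorem hasFDerivAt_dmat (hP : ∀ i, 0 < P i i) :
    HasFDerivAt dmat
      (toContinuousLinearMap (mulLeft ℝ (-(1 / 2 : ℝ) • dmat P ^ 3) ∘ₗ diagonalPart ℝ (Fin p))) P := by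
  have hD3 : -(1 / 2 : ℝ) • dmat P ^ 3 = diagonal fun i => -(1 / 2) * (√(P i i))⁻¹ ^ 3 := by
    rw [dmat, diagonal_pow, ← diagonal_smul]
    rfl
  rw [hD3]
  exact Matrix.hasFDerivAt_diagonal_comp_diag (f' := fun x => -(1 / 2) * (√x)⁻¹ ^ 3) fun i =>
    hasDerivAt_inv_sqrt (hP i)

theorem hasFDerivAt_normalizeDiag (hP : ∀ i, 0 < P i i) :
    HasFDerivAt normalizeDiag
      (toContinuousLinearMap (mulLeftRight ℝ (dmat P, dmat P) - (1 / 2 : ℝ) •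
        (mulRight ℝ (dmat P ^ 2 * normalizeDiag P) + mulLeft ℝ (normalizeDiag P * dmat P ^ 2)) ∘ₗ
          diagonalPart ℝ (Fin p))) P := by
  let _ : NormedRing (Matrix (Fin p) (Fin p) ℝ) := Matrix.linftyOpNormedRing
  let _ : NormedAlgebra ℝ (Matrix (Fin p) (Fin p) ℝ) := Matrix.linftyOpNormedAlgebra
  refine (((hasFDerivAt_dmat hP).mul' (hasFDerivAt_id P)).mul'
    (hasFDerivAt_dmat hP)).congr_fderiv ?_
  ext K : 1
  show dmat P * P * ((-(1 / 2 : ℝ) • dmat P ^ 3) * diagonal K.diag) +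
      (dmat P * K + (-(1 / 2 : ℝ) • dmat P ^ 3) * diagonal K.diag * P) * dmat P =
    dmat P * K * dmat P - (1 / 2 : ℝ) • (diagonal K.diag * (dmat P ^ 2 * normalizeDiag P) +
      normalizeDiag P * dmat P ^ 2 * diagonal K.diag)
  ext i j
  simp only [normalizeDiag, dmat, diagonal_pow, Matrix.smul_mul, Matrix.mul_smul,
    diagonal_mul_diagonal, diagonal_mul, mul_diagonal, Matrix.add_apply, Matrix.sub_apply,
    Matrix.smul_apply, Matrix.add_mul, Pi.pow_apply, diag_apply, smul_eq_mul, ← Matrix.mul_assoc]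
  ring

end

theorem hasFDerivAt_normalizedInv_general
    {p : ℕ} (Sigma : Matrix (Fin p) (Fin p) ℝ)
    (hinv : IsUnit Sigma.det)
    (P : Matrix (Fin p) (Fin p) ℝ) (hP : P = Sigma⁻¹)
    (hpos : ∀ i, 0 < P i i)
    (Pd : Matrix (Fin p) (Fin p) ℝ) (hPd : Pd = Matrix.diagonal fun i => P i i)
    (Ω : Matrix (Fin p) (Fin p) ℝ) (hΩ : Ω = dmat P * P * dmat P) :
    ∃ L : Matrix (Fin p) (Fin p) ℝ →L[ℝ] Matrix (Fin p) (Fin p) ℝ,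
      (∀ H : Matrix (Fin p) (Fin p) ℝ,
        L H = -(dmat P * (P * H * P) * dmat P)
          + (1 / 2 : ℝ) • ((Matrix.diagonal fun i => (P * H * P) i i) * Pd⁻¹ * Ω
              + Ω * Pd⁻¹ * (Matrix.diagonal fun i => (P * H * P) i i)))
      ∧ HasFDerivAt normalizedInv L Sigma := by
  subst hP hPd hΩ
  refine ⟨_, fun H => ?_, (hasFDerivAt_normalizeDiag hpos).comp Sigma
    (Matrix.hasFDerivAt_nonsing_inv ((Matrix.isUnit_iff_isUnit_det _).2 hinv))⟩
  set P := Sigma⁻¹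
  set K := P * H * P
  -- chain rule: the derivative of `normalizeDiag` at `P`, applied to `-K`
  show dmat P * -K * dmat P - (1 / 2 : ℝ) •
      ((diagonal fun i => (-K) i i) * (dmat P ^ 2 * normalizeDiag P) +
        normalizeDiag P * dmat P ^ 2 * diagonal fun i => (-K) i i) = _
  simp only [Matrix.neg_apply, ← diagonal_neg, dmat_sq_eq_inv_diagonal hpos, normalizeDiag,
    Matrix.mul_neg, Matrix.neg_mul, ← Matrix.mul_assoc]
  module

/-- The map sending a covariance matrix to its normalized inverse is Fréchet
differentiable at an invertible `Σ` (with `P = Σ⁻¹` having positive diagonal), with derivative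
`H ↦ −d(P)·(PHP)·d(P) + (1/2)(dg(PHP)·P_d⁻¹·Ω + Ω·P_d⁻¹·dg(PHP))`. -/
theorem hasFDerivAt_normalizedInv
    {p : ℕ} (hp : 1 ≤ p) (Sigma : Matrix (Fin p) (Fin p) ℝ)
    (hinv : IsUnit Sigma.det)
    (P : Matrix (Fin p) (Fin p) ℝ) (hP : P = Sigma⁻¹)
    (hpos : ∀ i, 0 < P i i)
    (Pd : Matrix (Fin p) (Fin p) ℝ) (hPd : Pd = Matrix.diagonal fun i => P i i)
    (Ω : Matrix (Fin p) (Fin p) ℝ) (hΩ : Ω = dmat P * P * dmat P) :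
    ∃ L : Matrix (Fin p) (Fin p) ℝ →L[ℝ] Matrix (Fin p) (Fin p) ℝ,
      (∀ H : Matrix (Fin p) (Fin p) ℝ,
        L H = -(dmat P * (P * H * P) * dmat P)
          + (1 / 2 : ℝ) • ((Matrix.diagonal fun i => (P * H * P) i i) * Pd⁻¹ * Ω
              + Ω * Pd⁻¹ * (Matrix.diagonal fun i => (P * H * P) i i)))
      ∧ HasFDerivAt normalizedInv L Sigma :=
  hasFDerivAt_normalizedInv_general Sigma hinv P hP hpos Pd hPd Ω hΩ
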